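/- For a Tychonoff space X and a family 𝒜 ⊆ 𝒰_X, the supremum of 𝒜 computed in the complete lattice 𝒰_X equals the topology on C(X) generated by the union of the topologies in 𝒜 (i.e., having ∪𝒜 as a subbase). -/

import Mathlib

open Set TopologicalSpace

/-- The basic set `V(f,A,ε)` of functions uniformly `ε`-close to `f` on `A`. -/
def Vset {X : Type*} [TopologicalSpace X] (f : C(X, ℝ)) (A : Set X) (ε : ℝ) : Set C(X, ℝ) :=
  {g | ∀ x ∈ A, |f x - g x| < ε}

/-- A nonempty directed family of subsets of `X`. -/
structure DirFam (X : Type*) where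
  sets : Set (Set X)
  nonempty : sets.Nonempty
  directed : ∀ A ∈ sets, ∀ B ∈ sets, ∃ E ∈ sets, A ∪ B ⊆ E

/-- The uniform topology `C_γ` on `C(X)` determined by a directed family `γ`. -/
def DirFam.top {X : Type*} [TopologicalSpace X] (γ : DirFam X) : TopologicalSpace C(X, ℝ) where
  IsOpen U := ∀ f ∈ U, ∃ A ∈ γ.sets, ∃ ε > 0, Vset f A ε ⊆ U
  isOpen_univ := by
    intro f _
    obtain ⟨A, hA⟩ := γ.nonempty
    exact ⟨A, hA, 1, one_pos, Set.subset_univ _⟩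
  isOpen_inter := by
    intro U W hU hW f hf
    obtain ⟨A, hA, ε, hε, hAU⟩ := hU f hf.1
    obtain ⟨B, hB, δ, hδ, hBW⟩ := hW f hf.2
    obtain ⟨E, hE, hsub⟩ := γ.directed A hA B hB
    refine ⟨E, hE, min ε δ, lt_min hε hδ, fun g hg => ⟨?_, ?_⟩⟩
    · exact hAU fun x hx =>
        lt_of_lt_of_le (hg x (hsub (Set.mem_union_left _ hx))) (min_le_left _ _)
    · exact hBW fun x hx =>
        lt_of_lt_of_le (hg x (hsub (Set.mem_union_right _ hx))) (min_le_right _ _)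
  isOpen_sUnion := by
    intro S hS f hf
    obtain ⟨U, hU, hfU⟩ := hf
    obtain ⟨A, hA, ε, hε, h⟩ := hS U hU f hfU
    exact ⟨A, hA, ε, hε, h.trans (Set.subset_sUnion_of_mem hU)⟩

/-- The lattice of uniform topologies on `C(X)`. -/
def UX (X : Type*) [TopologicalSpace X] : Set (TopologicalSpace C(X, ℝ)) :=
  {t | ∃ γ : DirFam X, t = γ.top}

/-- `tle s t` means the topology `s` is coarser than or equal to `t`
(inclusion of topologies, `τ_s ⊆ τ_t`). -/
def tle {X : Type*} [TopologicalSpace X] (s t : TopologicalSpace C(X, ℝ)) : Prop :=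
  ∀ U : Set C(X, ℝ), s.IsOpen U → t.IsOpen U

/-- The directed family `{∅}`, generating the indiscrete topology `C_∅`. -/
def cEmptyFam (X : Type*) : DirFam X :=
  ⟨{∅}, Set.singleton_nonempty _, by
    intro A hA B hB
    rw [Set.mem_singleton_iff] at hA hB
    exact ⟨∅, Set.mem_singleton _, by simp [hA, hB]⟩⟩

/-- The directed family `{X}`, generating the uniform-convergence topology `C_u`. -/
def cUnivFam (X : Type*) : DirFam X :=
  ⟨{Set.univ}, Set.singleton_nonempty _, fun A _ B _ =>
    ⟨Set.univ, Set.mem_singleton _, Set.subset_univ _⟩⟩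

/-- The directed family `{{x}}`. -/
def ptFam {X : Type*} (x : X) : DirFam X :=
  ⟨{{x}}, Set.singleton_nonempty _, by
    intro A hA B hB
    rw [Set.mem_singleton_iff] at hA hB
    exact ⟨{x}, Set.mem_singleton _, by simp [hA, hB]⟩⟩

/-- The directed family `{A}`. -/
def setFam {X : Type*} (A : Set X) : DirFam X :=
  ⟨{A}, Set.singleton_nonempty _, by
    intro B hB E hE
    rw [Set.mem_singleton_iff] at hB hE
    exact ⟨A, Set.mem_singleton _, by simp [hB, hE]⟩⟩

/-- The topology `C_x`. -/
def Cpt {X : Type*} [TopologicalSpace X] (x : X) : TopologicalSpace C(X, ℝ) :=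
  (ptFam x).top

/-- The topology `C_A`. -/
def CSet {X : Type*} [TopologicalSpace X] (A : Set X) : TopologicalSpace C(X, ℝ) :=
  (setFam A).top

/-- The pushforward `f*γ = {f[A] : A ∈ γ}` of a directed family along a map. -/
def DirFam.push {X Y : Type*} (f : X → Y) (γ : DirFam X) : DirFam Y :=
  ⟨(Set.image f) '' γ.sets, γ.nonempty.image _, by
    rintro A ⟨A', hA', rfl⟩ B ⟨B', hB', rfl⟩
    obtain ⟨E, hE, h⟩ := γ.directed A' hA' B' hB'
    exact ⟨f '' E, ⟨E, hE, rfl⟩, by rw [← Set.image_union]; exact Set.image_mono h⟩⟩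


/-- Auxiliary "strictly shrunk" basic set. -/
def Wset {X : Type*} [TopologicalSpace X] (f : C(X, ℝ)) (A : Set X) (ε : ℝ) : Set C(X, ℝ) :=
  {g | ∃ δ > 0, ∀ x ∈ A, |f x - g x| + δ < ε}

lemma Wset_open {X : Type*} [TopologicalSpace X] (γ : DirFam X) {A : Set X}
    (hA : A ∈ γ.sets) (f : C(X, ℝ)) (ε : ℝ) : γ.top.IsOpen (Wset f A ε) := by
  rintro g ⟨δ, hδ, hg⟩
  refine ⟨A, hA, δ / 2, half_pos hδ, fun h hh => ⟨δ / 2, half_pos hδ, fun x hx => ?_⟩⟩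
  have h1 : |f x - h x| ≤ |f x - g x| + |g x - h x| := abs_sub_le _ _ _
  have h2 : |g x - h x| < δ / 2 := hh x hx
  have h3 := hg x hx
  linarith

lemma self_mem_Wset {X : Type*} [TopologicalSpace X] (f : C(X, ℝ)) (A : Set X) {ε : ℝ}
    (hε : 0 < ε) : f ∈ Wset f A ε :=
  ⟨ε / 2, half_pos hε, fun x _ => by simp; linarith⟩

/-- The "generated" directed family: finite unions of sets from families of members of `S`. -/
def supFam {X : Type*} [TopologicalSpace X] (S : Set (TopologicalSpace C(X, ℝ))) :
    DirFam X where
  sets := {E | ∃ F : Set (Set X),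
    (∀ A ∈ F, ∃ s ∈ S, ∃ γ : DirFam X, s = γ.top ∧ A ∈ γ.sets) ∧ F.Finite ∧ E = ⋃₀ F}
  nonempty := ⟨∅, ∅, by simp, Set.finite_empty, by simp⟩
  directed := by
    rintro A ⟨F₁, hF₁, hfin₁, rfl⟩ B ⟨F₂, hF₂, hfin₂, rfl⟩
    refine ⟨⋃₀ (F₁ ∪ F₂), ⟨F₁ ∪ F₂, ?_, hfin₁.union hfin₂, rfl⟩, ?_⟩
    · rintro A (hA | hA)
      exacts [hF₁ A hA, hF₂ A hA]
    · rw [Set.sUnion_union]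

lemma generateOpen_biInter {α β : Type*} {g : Set (Set α)} {F : Set β} (hF : F.Finite)
    {W : β → Set α} :
    (∀ A ∈ F, TopologicalSpace.GenerateOpen g (W A)) →
    TopologicalSpace.GenerateOpen g (⋂ A ∈ F, W A) := by
  induction F, hF using Set.Finite.induction_on with
  | empty => intro _; simpa using TopologicalSpace.GenerateOpen.univ
  | @insert a F _ _ ih =>
    intro h
    rw [Set.biInter_insert]
    exact TopologicalSpace.GenerateOpen.inter _ _ (h a (Set.mem_insert _ _))
      (ih fun B hB => h B (Set.mem_insert_of_mem _ hB))

lemma isOpen_of_generateOpen {α : Type*} (τ : TopologicalSpace α) {g : Set (Set α)}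
    (h : ∀ V ∈ g, τ.IsOpen V) {U : Set α} (hU : TopologicalSpace.GenerateOpen g U) :
    τ.IsOpen U := by
  induction hU with
  | basic V hV => exact h V hV
  | univ => exact τ.isOpen_univ
  | inter _ _ _ _ ih1 ih2 => exact τ.isOpen_inter _ _ ih1 ih2
  | sUnion _ _ ih => exact τ.isOpen_sUnion _ ih

/-- the supremum in `𝒰_X` of a family `S ⊆ 𝒰_X` is the topology on `C(X)`
having `⋃S` as a subbase. -/
theorem stmt5 (X : Type*) [TopologicalSpace X] [T2Space X] [CompletelyRegularSpace X]
    (S : Set (TopologicalSpace C(X, ℝ))) (hS : S ⊆ UX X)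
    (t : TopologicalSpace C(X, ℝ)) (ht : t ∈ UX X)
    (hub : ∀ s ∈ S, tle s t) (hlub : ∀ u ∈ UX X, (∀ s ∈ S, tle s u) → tle t u) :
    t = TopologicalSpace.generateFrom {U : Set C(X, ℝ) | ∃ s ∈ S, s.IsOpen U} := by
  set g : Set (Set C(X, ℝ)) := {U : Set C(X, ℝ) | ∃ s ∈ S, s.IsOpen U} with hg
  -- every generateFrom-open set is t-open
  have hgen_t : ∀ U : Set C(X, ℝ), (TopologicalSpace.generateFrom g).IsOpen U → t.IsOpen U := by
    intro U hU
    exact isOpen_of_generateOpen t (fun V hV => by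
      obtain ⟨s, hs, h⟩ := hV; exact hub s hs V h) hU
  -- every supFam-open set is generateFrom-open
  have hsup_gen : ∀ U : Set C(X, ℝ), (supFam S).top.IsOpen U →
      (TopologicalSpace.generateFrom g).IsOpen U := by
    intro U hU
    have key : ∀ f ∈ U, ∃ V : Set C(X, ℝ),
        TopologicalSpace.GenerateOpen g V ∧ f ∈ V ∧ V ⊆ U := by
      intro f hf
      obtain ⟨E, ⟨F, hFP, hFfin, rfl⟩, ε, hε, hVsub⟩ := hU f hf
      refine ⟨⋂ A ∈ F, Wset f A ε, ?_, ?_, ?_⟩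
      · refine generateOpen_biInter (W := fun A => Wset f A ε) hFfin fun A hA => ?_
        obtain ⟨s, hs, γ, rfl, hAγ⟩ := hFP A hA
        exact TopologicalSpace.GenerateOpen.basic _ ⟨_, hs, Wset_open γ hAγ f ε⟩
      · exact Set.mem_iInter₂.2 fun A _ => self_mem_Wset f A hε
      · intro h hh
        refine hVsub fun x hx => ?_
        obtain ⟨A, hA, hxA⟩ := hx
        obtain ⟨δ, hδ, hWh⟩ := Set.mem_iInter₂.1 hh A hA
        have := hWh x hxA
        linarith
    have hUeq : U = ⋃₀ {V | TopologicalSpace.GenerateOpen g V ∧ V ⊆ U} := by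
      apply Set.Subset.antisymm
      · intro f hf
        obtain ⟨V, h1, h2, h3⟩ := key f hf
        exact ⟨V, ⟨h1, h3⟩, h2⟩
      · exact Set.sUnion_subset fun V hV => hV.2
    rw [hUeq]
    exact TopologicalSpace.GenerateOpen.sUnion _ fun V hV => hV.1
  -- supFam's topology is an upper bound in UX
  have hSle : ∀ s ∈ S, tle s (supFam S).top := by
    intro s hs U hUo f hf
    obtain ⟨γ, rfl⟩ := hS hs
    obtain ⟨A, hA, ε, hε, hsub⟩ := hUo f hf
    exact ⟨A, ⟨{A}, by rintro B rfl; exact ⟨_, hs, γ, rfl, hA⟩,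
      Set.finite_singleton _, (Set.sUnion_singleton A).symm⟩, ε, hε, hsub⟩
  have ht_sup : tle t (supFam S).top := hlub _ ⟨supFam S, rfl⟩ hSle
  -- conclude
  refine TopologicalSpace.ext ?_
  ext U
  exact ⟨fun h => hsup_gen U (ht_sup U h), fun h => hgen_t U h⟩
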